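/- arXiv:2602.19378 — 3 statements merged into one kernel-verified Lean document; each statement's English description precedes it below -/
import Mathlib

section
/- Under Assumption 1, for every x ∈ 𝒳, t ∈ 𝒯 and y ∈ 𝒴 such that P(X=x, T=t, R^X=1, R^T=1, R^Y=1) > 0, the full-data conditional outcome distribution equals the complete-case conditional distribution: P(Y=y | X=x, T=t) = P(Y=y | X=x, T=t, R^X=1, R^T=1, R^Y=1). Consequently the conditional distribution of Y given (X,T) is identified from units with all of X, T, Y observed. -/
open scoped Classical
noncomputable section

namespace CATEMNAR

variable {Ω : Type*} [Fintype Ω]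

/-- Probability of the event `E` under the pmf `p` on the finite space `Ω`. -/
def Pr (p : Ω → ℝ) (E : Ω → Prop) : ℝ := ∑ ω, if E ω then p ω else 0

/-- Conditional probability `P(E | C)` (junk value `0` when `P(C) = 0`). -/
def CPr (p : Ω → ℝ) (E C : Ω → Prop) : ℝ := Pr p (fun ω => E ω ∧ C ω) / Pr p C

/-- Conditional independence `A ⫫ B | C` under `p`: for all values `a, b, c` with
`P(C = c) > 0`, `P(A = a, B = b | C = c) = P(A = a | C = c) * P(B = b | C = c)`. -/
def CondIndep {α β γ : Type*} (p : Ω → ℝ) (A : Ω → α) (B : Ω → β) (C : Ω → γ) : Prop :=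
  ∀ (a : α) (b : β) (c : γ), 0 < Pr p (fun ω => C ω = c) →
    CPr p (fun ω => A ω = a ∧ B ω = b) (fun ω => C ω = c) =
      CPr p (fun ω => A ω = a) (fun ω => C ω = c) *
        CPr p (fun ω => B ω = b) (fun ω => C ω = c)

lemma Pr_congr (p : Ω → ℝ) {E F : Ω → Prop} (h : ∀ ω, E ω ↔ F ω) : Pr p E = Pr p F := by
  unfold Pr
  exact Finset.sum_congr rfl fun ω _ => by simp [h ω]

lemma Pr_mono (p : Ω → ℝ) (hp0 : ∀ ω, 0 ≤ p ω) {E F : Ω → Prop} (h : ∀ ω, E ω → F ω) :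
    Pr p E ≤ Pr p F := by
  unfold Pr
  apply Finset.sum_le_sum
  intro ω _
  split_ifs with h1 h2
  · exact le_refl _
  · exact absurd (h ω h1) h2
  · exact hp0 ω
  · exact le_refl _

lemma CPr_congr (p : Ω → ℝ) {E E' C C' : Ω → Prop} (hE : ∀ ω, E ω ↔ E' ω)
    (hC : ∀ ω, C ω ↔ C' ω) : CPr p E C = CPr p E' C' := by
  unfold CPr
  rw [Pr_congr p (fun ω => and_congr (hE ω) (hC ω)), Pr_congr p hC]

/-- If `A ⫫ B | C` then conditioning additionally on `A = a` does not change the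
conditional distribution of `B`. -/
lemma cond_drop {α β γ : Type*} (p : Ω → ℝ)
    (A : Ω → α) (B : Ω → β) (C : Ω → γ)
    (h : CondIndep p A B C) (a : α) (b : β) (c : γ)
    (hC : 0 < Pr p (fun ω => C ω = c))
    (hAC : 0 < Pr p (fun ω => A ω = a ∧ C ω = c)) :
    CPr p (fun ω => B ω = b) (fun ω => A ω = a ∧ C ω = c) =
      CPr p (fun ω => B ω = b) (fun ω => C ω = c) := by
  have key := h a b c hC
  unfold CPr at key ⊢
  have h1 : Pr p (fun ω => B ω = b ∧ A ω = a ∧ C ω = c) =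
      Pr p (fun ω => (A ω = a ∧ B ω = b) ∧ C ω = c) := Pr_congr p (by tauto)
  rw [h1]
  have hCne : Pr p (fun ω => C ω = c) ≠ 0 := ne_of_gt hC
  have hACne : Pr p (fun ω => A ω = a ∧ C ω = c) ≠ 0 := ne_of_gt hAC
  field_simp at key ⊢
  nlinarith [key, sq_nonneg (Pr p (fun ω => C ω = c))]

/-- Under Assumption 1, the full-data conditional outcome distribution equals the
complete-case conditional distribution. -/
theorem stmt_0 {𝒳 𝒯 𝒴 : Type*} [Fintype 𝒳] [Fintype 𝒯] [Fintype 𝒴]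
    (p : Ω → ℝ) (hp0 : ∀ ω, 0 ≤ p ω) (hp1 : ∑ ω, p ω = 1)
    (X : Ω → 𝒳) (T : Ω → 𝒯) (Y : Ω → 𝒴) (RX RT RY : Ω → Bool)
    (hRX : CondIndep p RX Y (fun ω => (X ω, T ω)))
    (hRT : CondIndep p RT Y (fun ω => (X ω, T ω, RX ω)))
    (hRY : CondIndep p RY Y (fun ω => (X ω, T ω, RX ω, RT ω)))
    (x : 𝒳) (t : 𝒯) (y : 𝒴)
    (hpos : 0 < Pr p (fun ω =>
      X ω = x ∧ T ω = t ∧ RX ω = true ∧ RT ω = true ∧ RY ω = true)) :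
    CPr p (fun ω => Y ω = y) (fun ω => X ω = x ∧ T ω = t) =
      CPr p (fun ω => Y ω = y)
        (fun ω => X ω = x ∧ T ω = t ∧ RX ω = true ∧ RT ω = true ∧ RY ω = true) := by
  -- positivity of all intermediate conditioning events
  have h0 : 0 < Pr p (fun ω => (X ω, T ω) = (x, t)) :=
    lt_of_lt_of_le hpos (Pr_mono p hp0 (by intro ω; simp +contextual [Prod.ext_iff]))
  have h1 : 0 < Pr p (fun ω => RX ω = true ∧ (X ω, T ω) = (x, t)) :=
    lt_of_lt_of_le hpos (Pr_mono p hp0 (by intro ω; simp +contextual [Prod.ext_iff]))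
  have h1' : 0 < Pr p (fun ω => (X ω, T ω, RX ω) = (x, t, true)) :=
    lt_of_lt_of_le hpos (Pr_mono p hp0 (by intro ω; simp +contextual [Prod.ext_iff]))
  have h2 : 0 < Pr p (fun ω => RT ω = true ∧ (X ω, T ω, RX ω) = (x, t, true)) :=
    lt_of_lt_of_le hpos (Pr_mono p hp0 (by intro ω; simp +contextual [Prod.ext_iff]))
  have h2' : 0 < Pr p (fun ω => (X ω, T ω, RX ω, RT ω) = (x, t, true, true)) :=
    lt_of_lt_of_le hpos (Pr_mono p hp0 (by intro ω; simp +contextual [Prod.ext_iff]))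
  have h3 : 0 < Pr p (fun ω => RY ω = true ∧ (X ω, T ω, RX ω, RT ω) = (x, t, true, true)) :=
    lt_of_lt_of_le hpos (Pr_mono p hp0 (by intro ω; simp +contextual [Prod.ext_iff]))
  have e1 := cond_drop p RX Y (fun ω => (X ω, T ω)) hRX true y (x, t) h0 h1
  have e2 := cond_drop p RT Y (fun ω => (X ω, T ω, RX ω)) hRT true y (x, t, true) h1' h2
  have e3 := cond_drop p RY Y (fun ω => (X ω, T ω, RX ω, RT ω)) hRY true y
      (x, t, true, true) h2' h3
  calc CPr p (fun ω => Y ω = y) (fun ω => X ω = x ∧ T ω = t)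
      = CPr p (fun ω => Y ω = y) (fun ω => (X ω, T ω) = (x, t)) :=
        CPr_congr p (fun ω => Iff.rfl) (by intro ω; simp [Prod.ext_iff])
    _ = CPr p (fun ω => Y ω = y) (fun ω => RX ω = true ∧ (X ω, T ω) = (x, t)) := e1.symm
    _ = CPr p (fun ω => Y ω = y) (fun ω => (X ω, T ω, RX ω) = (x, t, true)) :=
        CPr_congr p (fun ω => Iff.rfl) (by intro ω; simp [Prod.ext_iff]; tauto)
    _ = CPr p (fun ω => Y ω = y) (fun ω => RT ω = true ∧ (X ω, T ω, RX ω) = (x, t, true)) :=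
        e2.symm
    _ = CPr p (fun ω => Y ω = y) (fun ω => (X ω, T ω, RX ω, RT ω) = (x, t, true, true)) :=
        CPr_congr p (fun ω => Iff.rfl) (by intro ω; simp [Prod.ext_iff]; tauto)
    _ = CPr p (fun ω => Y ω = y)
          (fun ω => RY ω = true ∧ (X ω, T ω, RX ω, RT ω) = (x, t, true, true)) := e3.symm
    _ = CPr p (fun ω => Y ω = y)
          (fun ω => X ω = x ∧ T ω = t ∧ RX ω = true ∧ RT ω = true ∧ RY ω = true) :=
        CPr_congr p (fun ω => Iff.rfl) (by intro ω; simp [Prod.ext_iff]; tauto)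

end CATEMNAR
end
end

section
/- Under Assumption 3, suppose P(X=x, T=t, R^X=1, R^T=1) > 0 and, for every y ∈ 𝒴 with P(T=t, Y=y, R^X=1, R^T=1) > 0, the response probability P(R^Y=1 | T=t, Y=y, R^X=1, R^T=1) is strictly positive. Then the Fredholm (linear system) equation holds: P(R^Y=0 | T=t, X=x, R^T=1, R^X=1) = Σ_{y ∈ 𝒴} P(Y=y, R^Y=1 | T=t, X=x, R^T=1, R^X=1) · ζ_t(y), where ζ_t(y) = P(R^Y=0 | T=t, Y=y, R^X=1, R^T=1) / P(R^Y=1 | T=t, Y=y, R^X=1, R^T=1). -/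
open scoped Classical
noncomputable section

namespace CATEMNAR

variable {Ω : Type*} [Fintype Ω]

lemma Pr_nonneg (p : Ω → ℝ) (hp0 : ∀ ω, 0 ≤ p ω) (E : Ω → Prop) : 0 ≤ Pr p E :=
  Finset.sum_nonneg fun ω _ => by by_cases h : E ω <;> simp [h, hp0 ω]

lemma Pr_split {𝒴 : Type*} [Fintype 𝒴] (p : Ω → ℝ) (Y : Ω → 𝒴) (E : Ω → Prop) :
    Pr p E = ∑ y : 𝒴, Pr p (fun ω => Y ω = y ∧ E ω) := by
  unfold Pr
  rw [Finset.sum_comm]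
  refine Finset.sum_congr rfl fun ω _ => ?_
  rw [Finset.sum_eq_single (Y ω)]
  · simp
  · intro b _ hb
    exact if_neg fun h => hb h.1.symm
  · simp

/-- Under Assumption 3, the Fredholm (linear-system) equation holds:
`P(R^Y=0 | T=t, X=x, R^T=1, R^X=1)
  = Σ_y P(Y=y, R^Y=1 | T=t, X=x, R^T=1, R^X=1) * ζ_t(y)`,
where `ζ_t(y)` is the conditional missingness odds of the outcome at treatment level `t`. -/
theorem stmt_10 {𝒳 𝒯 𝒴 : Type*} [Fintype 𝒳] [Fintype 𝒯] [Fintype 𝒴]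
    (p : Ω → ℝ) (hp0 : ∀ ω, 0 ≤ p ω) (hp1 : ∑ ω, p ω = 1)
    (X : Ω → 𝒳) (T : Ω → 𝒯) (Y : Ω → 𝒴) (RX RT RY : Ω → Bool)
    (hRX : CondIndep p RX Y (fun ω => (X ω, T ω)))
    (hRT : CondIndep p RT Y (fun ω => (X ω, T ω, RX ω)))
    (hRY : CondIndep p RY X (fun ω => (T ω, Y ω, RX ω, RT ω)))
    (x : 𝒳) (t : 𝒯)
    (hpos1 : 0 < Pr p (fun ω => X ω = x ∧ T ω = t ∧ RX ω = true ∧ RT ω = true))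
    (hpos2 : ∀ y : 𝒴, 0 < Pr p (fun ω => T ω = t ∧ Y ω = y ∧ RX ω = true ∧ RT ω = true) →
      0 < CPr p (fun ω => RY ω = true)
        (fun ω => T ω = t ∧ Y ω = y ∧ RX ω = true ∧ RT ω = true)) :
    CPr p (fun ω => RY ω = false)
        (fun ω => T ω = t ∧ X ω = x ∧ RT ω = true ∧ RX ω = true) =
      ∑ y : 𝒴,
        CPr p (fun ω => Y ω = y ∧ RY ω = true)
            (fun ω => T ω = t ∧ X ω = x ∧ RT ω = true ∧ RX ω = true) *
          (CPr p (fun ω => RY ω = false)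
              (fun ω => T ω = t ∧ Y ω = y ∧ RX ω = true ∧ RT ω = true) /
            CPr p (fun ω => RY ω = true)
              (fun ω => T ω = t ∧ Y ω = y ∧ RX ω = true ∧ RT ω = true)) := by
  set C : Ω → Prop := fun ω => T ω = t ∧ X ω = x ∧ RT ω = true ∧ RX ω = true with hC
  have hCpos : 0 < Pr p C := by
    refine lt_of_lt_of_le hpos1 (le_of_eq (Pr_congr p fun ω => ?_))
    tauto
  -- per-y key identity at unconditional level
  have key : ∀ y : 𝒴,
      Pr p (fun ω => Y ω = y ∧ RY ω = false ∧ C ω) =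
      Pr p (fun ω => (Y ω = y ∧ RY ω = true) ∧ C ω) *
        (CPr p (fun ω => RY ω = false)
            (fun ω => T ω = t ∧ Y ω = y ∧ RX ω = true ∧ RT ω = true) /
          CPr p (fun ω => RY ω = true)
            (fun ω => T ω = t ∧ Y ω = y ∧ RX ω = true ∧ RT ω = true)) := by
    intro y
    set D : Ω → Prop := fun ω => T ω = t ∧ Y ω = y ∧ RX ω = true ∧ RT ω = true with hD
    by_cases hyC : 0 < Pr p (fun ω => Y ω = y ∧ C ω)
    · -- positive case
      have hDpos : 0 < Pr p D := by
        refine lt_of_lt_of_le hyC (Pr_mono p hp0 fun ω h => ?_)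
        obtain ⟨h1, h2, h3, h4, h5⟩ := h
        exact ⟨h2, h1, h5, h4⟩
      have hDpos' : 0 < Pr p (fun ω => (fun ω => (T ω, Y ω, RX ω, RT ω)) ω = (t, y, true, true)) := by
        refine lt_of_lt_of_le hDpos (le_of_eq (Pr_congr p fun ω => ?_))
        simp [Prod.ext_iff, hD, and_assoc]
      have hRYpos : 0 < Pr p (fun ω => RY ω = true ∧ D ω) := by
        have := hpos2 y hDpos
        rw [CPr] at this
        have := mul_pos this hDpos
        rwa [div_mul_cancel₀ _ (ne_of_gt hDpos)] at this
      -- conditional independence, converted to D form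
      have indep : ∀ a : Bool,
          Pr p (fun ω => RY ω = a ∧ X ω = x ∧ D ω) * Pr p D =
          Pr p (fun ω => RY ω = a ∧ D ω) * Pr p (fun ω => X ω = x ∧ D ω) := by
        intro a
        have h := hRY a x (t, y, true, true) hDpos'
        simp only [CPr] at h
        have eD : ∀ (E : Ω → Prop),
            Pr p (fun ω => E ω ∧ (fun ω => (T ω, Y ω, RX ω, RT ω)) ω = (t, y, true, true)) =
            Pr p (fun ω => E ω ∧ D ω) := fun E =>
          Pr_congr p fun ω => by simp [Prod.ext_iff, hD, and_assoc]
        have ePrD : Pr p (fun ω => (fun ω => (T ω, Y ω, RX ω, RT ω)) ω = (t, y, true, true)) =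
            Pr p D := Pr_congr p fun ω => by simp [Prod.ext_iff, hD, and_assoc]
        rw [eD, eD, eD, ePrD] at h
        have hd : Pr p D ≠ 0 := ne_of_gt hDpos
        rw [div_mul_div_comm, div_eq_div_iff hd (by positivity)] at h
        have h2 : Pr p (fun ω => (RY ω = a ∧ X ω = x) ∧ D ω) * Pr p D =
            Pr p (fun ω => RY ω = a ∧ D ω) * Pr p (fun ω => X ω = x ∧ D ω) :=
          mul_right_cancel₀ hd (by linear_combination h)
        calc Pr p (fun ω => RY ω = a ∧ X ω = x ∧ D ω) * Pr p D
            = Pr p (fun ω => (RY ω = a ∧ X ω = x) ∧ D ω) * Pr p D := by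
              rw [Pr_congr p (fun ω => by tauto :
                ∀ ω, (RY ω = a ∧ X ω = x ∧ D ω) ↔ ((RY ω = a ∧ X ω = x) ∧ D ω))]
          _ = _ := h2
      -- rewrite events: Y=y ∧ RY=a ∧ C  ↔  RY=a ∧ X=x ∧ D
      have eEv : ∀ a : Bool,
          Pr p (fun ω => Y ω = y ∧ RY ω = a ∧ C ω) =
          Pr p (fun ω => RY ω = a ∧ X ω = x ∧ D ω) :=
        fun a => Pr_congr p fun ω => by simp only [hC, hD]; tauto
      have hzeta : CPr p (fun ω => RY ω = false) D / CPr p (fun ω => RY ω = true) D =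
          Pr p (fun ω => RY ω = false ∧ D ω) / Pr p (fun ω => RY ω = true ∧ D ω) := by
        rw [CPr, CPr, div_div_div_comm, div_self (ne_of_gt hDpos), div_one]
      have efalse := indep false
      have etrue := indep true
      have goal2 : Pr p (fun ω => RY ω = false ∧ X ω = x ∧ D ω) =
          Pr p (fun ω => RY ω = true ∧ X ω = x ∧ D ω) *
            (Pr p (fun ω => RY ω = false ∧ D ω) / Pr p (fun ω => RY ω = true ∧ D ω)) := by
        have hmul : Pr p (fun ω => RY ω = false ∧ X ω = x ∧ D ω) *
            Pr p (fun ω => RY ω = true ∧ D ω) =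
            Pr p (fun ω => RY ω = true ∧ X ω = x ∧ D ω) *
            Pr p (fun ω => RY ω = false ∧ D ω) := by
          have hd : Pr p D ≠ 0 := ne_of_gt hDpos
          have h1 : Pr p (fun ω => RY ω = false ∧ X ω = x ∧ D ω) =
              Pr p (fun ω => RY ω = false ∧ D ω) * Pr p (fun ω => X ω = x ∧ D ω) / Pr p D := by
            rw [eq_div_iff hd]; exact efalse
          have h2 : Pr p (fun ω => RY ω = true ∧ X ω = x ∧ D ω) =
              Pr p (fun ω => RY ω = true ∧ D ω) * Pr p (fun ω => X ω = x ∧ D ω) / Pr p D := by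
            rw [eq_div_iff hd]; exact etrue
          rw [h1, h2]; ring
        rw [← mul_div_assoc, eq_div_iff (ne_of_gt hRYpos)]
        exact hmul
      rw [eEv false,
        Pr_congr p (fun ω => by tauto :
          ∀ ω, ((Y ω = y ∧ RY ω = true) ∧ C ω) ↔ (Y ω = y ∧ RY ω = true ∧ C ω)),
        eEv true, hzeta, goal2]
    · -- zero case: both sides vanish
      push_neg at hyC
      have hyC0 : Pr p (fun ω => Y ω = y ∧ C ω) = 0 :=
        le_antisymm hyC (Pr_nonneg p hp0 _)
      have z1 : Pr p (fun ω => Y ω = y ∧ RY ω = false ∧ C ω) = 0 := by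
        refine le_antisymm ?_ (Pr_nonneg p hp0 _)
        rw [← hyC0]
        exact Pr_mono p hp0 fun ω h => ⟨h.1, h.2.2⟩
      have z2 : Pr p (fun ω => (Y ω = y ∧ RY ω = true) ∧ C ω) = 0 := by
        refine le_antisymm ?_ (Pr_nonneg p hp0 _)
        rw [← hyC0]
        exact Pr_mono p hp0 fun ω h => ⟨h.1.1, h.2⟩
      rw [z1, z2, zero_mul]
  -- assemble
  rw [CPr, Pr_split p Y (fun ω => RY ω = false ∧ C ω)]
  rw [Finset.sum_div]
  refine Finset.sum_congr rfl fun y _ => ?_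
  rw [key y]
  simp only [CPr]
  ring
end CATEMNAR
end
end

section
/- (Proposition S1: completeness in T of the Gaussian linear outcome model with nonzero treatment slope.) Let σ > 0 and a, c ∈ ℝ with c ≠ 0 (in the paper, a = β₀ + β_xᵀx and c = β_t + β_{tx}x). Let μ be a finite Borel measure on ℝ (the observed-data law of T on the relevant event). If g : ℝ → ℝ is μ-integrable and ∫ g(t) · exp(−(y − a − c·t)² / (2σ²)) dμ(t) = 0 for Lebesgue-almost every y ∈ ℝ, then g = 0 μ-almost everywhere. -/
open MeasureTheory

set_option maxHeartbeats 1000000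

open Real Complex Filter Set in
private lemma quad_bound (β A t : ℝ) (hβ : 0 < β) :
    A * |t| - β * t ^ 2 ≤ A ^ 2 / (4 * β) := by
  rw [le_div_iff₀ (by positivity), ← _root_.sq_abs t]
  nlinarith [sq_nonneg (2 * β * |t| - A)]

open Real Complex Filter Set in
private lemma norm_cexp_mul_ofReal (z : ℂ) (t : ℝ) :
    ‖Complex.exp (z * t)‖ = Real.exp (z.re * t) := by
  rw [Complex.norm_exp]
  simp [Complex.mul_re]

open Real Complex Filter Set in
/-- A real smooth compactly supported function, viewed as a complex-valued Schwartz map. -/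
private noncomputable def toCpxSchwartz (φ : ℝ → ℝ) (hφ : ContDiff ℝ ((⊤ : ℕ∞) : WithTop ℕ∞) φ)
    (hcs : HasCompactSupport φ) : SchwartzMap ℝ ℂ where
  toFun := fun x => (φ x : ℂ)
  smooth' := Complex.ofRealCLM.contDiff.comp hφ
  decay' := by
    intro k n
    have hsupp : HasCompactSupport (fun x : ℝ => (φ x : ℂ)) :=
      hcs.comp_left (g := fun r : ℝ => (r : ℂ)) Complex.ofReal_zero
    have hsm : ContDiff ℝ ((⊤ : ℕ∞) : WithTop ℕ∞) (fun x : ℝ => (φ x : ℂ)) :=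
      Complex.ofRealCLM.contDiff.comp hφ
    have hcont : Continuous fun x : ℝ =>
        ‖x‖ ^ k * ‖iteratedFDeriv ℝ n (fun x : ℝ => (φ x : ℂ)) x‖ :=
      ((continuous_id.norm.pow k).mul
        ((hsm.continuous_iteratedFDeriv (by exact_mod_cast le_top)).norm))
    have hsupp2 : HasCompactSupport fun x : ℝ =>
        ‖x‖ ^ k * ‖iteratedFDeriv ℝ n (fun x : ℝ => (φ x : ℂ)) x‖ :=
      ((hsupp.iteratedFDeriv n).norm).mul_left
    obtain ⟨C, hC⟩ := hcont.bounded_above_of_compact_support hsupp2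
    exact ⟨C, fun x => by simpa using hC x⟩

open Real Complex Filter Set in
/-- Proposition S1: completeness in `T` of the Gaussian linear outcome model with
nonzero treatment slope. If `σ > 0`, `c ≠ 0`, `μ` is a finite Borel measure on `ℝ`,
`g` is `μ`-integrable, and `∫ g(t) · exp(−(y − a − c·t)²/(2σ²)) dμ(t) = 0` for
Lebesgue-almost every `y`, then `g = 0` `μ`-almost everywhere. -/
theorem stmt_14 (σ a c : ℝ) (hσ : 0 < σ) (hc : c ≠ 0)
    (μ : Measure ℝ) [IsFiniteMeasure μ]
    (g : ℝ → ℝ) (hg : Integrable g μ)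
    (h : ∀ᵐ y ∂(volume : Measure ℝ),
      ∫ t, g t * Real.exp (-(y - a - c * t) ^ 2 / (2 * σ ^ 2)) ∂μ = 0) :
    g =ᵐ[μ] 0 := by
  have hσ2 : (0:ℝ) < 2 * σ ^ 2 := by positivity
  have hc2 : (0:ℝ) < c ^ 2 := by positivity
  set β : ℝ := c ^ 2 / (2 * σ ^ 2) with hβdef
  have hβ : 0 < β := by positivity
  set H : ℝ → ℝ := fun t => g t * Real.exp (-β * t ^ 2) with hHdef
  have hg_aesm : AEStronglyMeasurable g μ := hg.1
  have hexpβ_cont : Continuous fun t : ℝ => Real.exp (-β * t ^ 2) := by fun_prop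
  have hH_aesm : AEStronglyMeasurable H μ := hg_aesm.mul hexpβ_cont.aestronglyMeasurable
  have hH_le : ∀ t, |H t| ≤ |g t| := by
    intro t
    rw [hHdef]
    simp only [abs_mul, Real.abs_exp]
    calc |g t| * Real.exp (-β * t ^ 2) ≤ |g t| * 1 := by
          gcongr
          exact Real.exp_le_one_iff.2 (by nlinarith [sq_nonneg t, hβ.le])
      _ = |g t| := mul_one _
  have hH_int : Integrable H μ := by
    refine hg.norm.mono' hH_aesm ?_
    filter_upwards with t
    simpa using hH_le t
  -- Step A : the integral vanishes for EVERY y, by continuity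
  have hGcont : Continuous fun y : ℝ =>
      ∫ t, g t * Real.exp (-(y - a - c * t) ^ 2 / (2 * σ ^ 2)) ∂μ := by
    apply continuous_of_dominated (bound := fun t => |g t|)
    · intro y
      apply hg_aesm.mul
      apply Continuous.aestronglyMeasurable
      exact Real.continuous_exp.comp
        ((((continuous_const.sub (continuous_const.mul continuous_id)).pow 2).neg).div_const _)
    · intro y
      filter_upwards with t
      rw [Real.norm_eq_abs, abs_mul, Real.abs_exp]
      calc |g t| * Real.exp (-(y - a - c * t) ^ 2 / (2 * σ ^ 2))
          ≤ |g t| * 1 := by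
            gcongr
            exact Real.exp_le_one_iff.2
              (div_nonpos_of_nonpos_of_nonneg (neg_nonpos.2 (sq_nonneg _)) hσ2.le)
        _ = |g t| := mul_one _
    · exact hg.norm
    · filter_upwards with t
      apply continuous_const.mul
      exact Real.continuous_exp.comp
        ((((continuous_id.sub continuous_const).sub continuous_const).pow 2).neg.div_const _)
  have hG : ∀ y : ℝ, ∫ t, g t * Real.exp (-(y - a - c * t) ^ 2 / (2 * σ ^ 2)) ∂μ = 0 := by
    have := (hGcont.ae_eq_iff_eq volume (g := fun _ : ℝ => (0:ℝ)) continuous_const).mp h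
    exact fun y => congrFun this y
  -- Step B : the real Laplace transform of H vanishes
  have hLap : ∀ s : ℝ, ∫ t, H t * Real.exp (s * t) ∂μ = 0 := by
    intro s
    set u : ℝ := s * σ ^ 2 / c with hudef
    have hy := hG (a + u)
    have hident : ∀ t, g t * Real.exp (-((a + u) - a - c * t) ^ 2 / (2 * σ ^ 2))
        = Real.exp (-u ^ 2 / (2 * σ ^ 2)) * (H t * Real.exp (s * t)) := by
      intro t
      rw [hHdef]
      rw [show Real.exp (-u ^ 2 / (2 * σ ^ 2)) * (g t * Real.exp (-β * t ^ 2) * Real.exp (s * t))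
          = g t * (Real.exp (-u ^ 2 / (2 * σ ^ 2)) * Real.exp (-β * t ^ 2) * Real.exp (s * t))
          from by ring]
      rw [← Real.exp_add, ← Real.exp_add]
      congr 1
      rw [hudef, hβdef]
      field_simp
      ring
    rw [show (fun t => g t * Real.exp (-((a + u) - a - c * t) ^ 2 / (2 * σ ^ 2)))
        = fun t => Real.exp (-u ^ 2 / (2 * σ ^ 2)) * (H t * Real.exp (s * t))
        from funext hident, integral_const_mul] at hy
    rcases mul_eq_zero.mp hy with h1 | h2
    · exact absurd h1 (Real.exp_ne_zero _)
    · exact h2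
  -- complex integrand and integrability
  set F : ℂ → ℝ → ℂ := fun z t => (H t : ℂ) * Complex.exp (z * t) with hFdef
  have hcexp_cont : ∀ z : ℂ, Continuous fun t : ℝ => Complex.exp (z * t) :=
    fun z => Complex.continuous_exp.comp (continuous_const.mul Complex.continuous_ofReal)
  have hnormF : ∀ z t, ‖F z t‖ = |H t| * Real.exp (z.re * t) := by
    intro z t
    rw [hFdef]
    simp only [norm_mul, Complex.norm_real, Real.norm_eq_abs, norm_cexp_mul_ofReal]
  have hF_aesm : ∀ z : ℂ, AEStronglyMeasurable (F z) μ := by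
    intro z
    exact (Complex.continuous_ofReal.comp_aestronglyMeasurable hH_aesm).mul
      (hcexp_cont z).aestronglyMeasurable
  have hbound_key : ∀ (A : ℝ) (t : ℝ), Real.exp (-β * t ^ 2) * Real.exp (A * |t|)
      ≤ Real.exp (A ^ 2 / (4 * β)) := by
    intro A t
    rw [← Real.exp_add]
    exact Real.exp_le_exp.2 (by linarith [quad_bound β A t hβ])
  have hHg : ∀ t, |H t| ≤ |g t| * Real.exp (-β * t ^ 2) := by
    intro t
    rw [hHdef, abs_mul, Real.abs_exp]
  have hF_int : ∀ z : ℂ, Integrable (F z) μ := by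
    intro z
    refine (hg.norm.const_mul (Real.exp (‖z‖ ^ 2 / (4 * β)))).mono' (hF_aesm z) ?_
    filter_upwards with t
    rw [hnormF]
    calc |H t| * Real.exp (z.re * t)
        ≤ (|g t| * Real.exp (-β * t ^ 2)) * Real.exp (‖z‖ * |t|) := by
          apply mul_le_mul (hHg t) _ (Real.exp_nonneg _) (by positivity)
          apply Real.exp_le_exp.2
          calc z.re * t ≤ |z.re * t| := le_abs_self _
            _ = |z.re| * |t| := abs_mul _ _
            _ ≤ ‖z‖ * |t| := by gcongr; exact Complex.abs_re_le_norm z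
      _ = |g t| * (Real.exp (-β * t ^ 2) * Real.exp (‖z‖ * |t|)) := by ring
      _ ≤ |g t| * Real.exp (‖z‖ ^ 2 / (4 * β)) := by
          gcongr
          exact hbound_key _ _
      _ = Real.exp (‖z‖ ^ 2 / (4 * β)) * |g t| := mul_comm _ _
  -- Step C : the entire function
  set Fc : ℂ → ℂ := fun z => ∫ t, F z t ∂μ with hFcdef
  have hFc0 : ∀ s : ℝ, Fc (s : ℂ) = 0 := by
    intro s
    have h1 : Fc (s : ℂ) = ∫ t, ((H t * Real.exp (s * t) : ℝ) : ℂ) ∂μ := by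
      rw [hFcdef]
      apply integral_congr_ae
      filter_upwards with t
      rw [hFdef]
      push_cast
      ring
    rw [h1, show (∫ t, ((H t * Real.exp (s * t) : ℝ) : ℂ) ∂μ)
        = ((∫ t, H t * Real.exp (s * t) ∂μ : ℝ) : ℂ) from integral_ofReal,
      hLap s, Complex.ofReal_zero]
  have hFc_diff : Differentiable ℂ Fc := by
    intro z₀
    have key := hasDerivAt_integral_of_dominated_loc_of_deriv_le
      (F := F) (F' := fun z t => (H t : ℂ) * (Complex.exp (z * t) * t))
      (x₀ := z₀) (s := Metric.ball z₀ 1)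
      (bound := fun t => Real.exp ((‖z₀‖ + 2) ^ 2 / (4 * β)) * |g t|) (Metric.ball_mem_nhds z₀ one_pos)
      (Filter.Eventually.of_forall fun z => hF_aesm z) (hF_int z₀)
      ?_ ?_ ?_ ?_
    · exact key.2.differentiableAt
    · exact (Complex.continuous_ofReal.comp_aestronglyMeasurable hH_aesm).mul
        (((hcexp_cont z₀).mul Complex.continuous_ofReal).aestronglyMeasurable)
    · filter_upwards with t z hz
      have hzn : ‖z‖ ≤ ‖z₀‖ + 1 := by
        have h3 := (mem_ball_iff_norm.mp hz).le
        calc ‖z‖ = ‖z₀ + (z - z₀)‖ := by ring_nf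
          _ ≤ ‖z₀‖ + ‖z - z₀‖ := norm_add_le _ _
          _ ≤ ‖z₀‖ + 1 := by linarith
      have habs : ‖(H t : ℂ) * (Complex.exp (z * t) * t)‖
          = |H t| * (Real.exp (z.re * t) * |t|) := by
        simp only [norm_mul, Complex.norm_real, Real.norm_eq_abs, norm_cexp_mul_ofReal]
      rw [habs]
      have ht_exp : |t| ≤ Real.exp |t| := by
        linarith [Real.add_one_le_exp |t|, abs_nonneg t]
      have har : Real.exp (z.re * t) * |t| ≤ Real.exp ((‖z₀‖ + 2) * |t|) := by
        calc Real.exp (z.re * t) * |t|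
            ≤ Real.exp ((‖z₀‖ + 1) * |t|) * Real.exp |t| := by
              apply mul_le_mul _ ht_exp (abs_nonneg t) (Real.exp_nonneg _)
              apply Real.exp_le_exp.2
              calc z.re * t ≤ |z.re * t| := le_abs_self _
                _ = |z.re| * |t| := abs_mul _ _
                _ ≤ (‖z₀‖ + 1) * |t| := by
                    gcongr
                    exact (Complex.abs_re_le_norm z).trans hzn
          _ = Real.exp ((‖z₀‖ + 2) * |t|) := by
              rw [← Real.exp_add]
              congr 1
              ring
      calc |H t| * (Real.exp (z.re * t) * |t|)
          ≤ (|g t| * Real.exp (-β * t ^ 2)) * Real.exp ((‖z₀‖ + 2) * |t|) :=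
            mul_le_mul (hHg t) har (by positivity) (by positivity)
        _ = |g t| * (Real.exp (-β * t ^ 2) * Real.exp ((‖z₀‖ + 2) * |t|)) := by ring
        _ ≤ |g t| * Real.exp ((‖z₀‖ + 2) ^ 2 / (4 * β)) := by
            gcongr
            exact hbound_key _ _
        _ = Real.exp ((‖z₀‖ + 2) ^ 2 / (4 * β)) * |g t| := mul_comm _ _
    · exact hg.norm.const_mul _
    · filter_upwards with t z hz
      have h4 : HasDerivAt (fun w : ℂ => Complex.exp (w * t)) (Complex.exp (z * t) * t) z := by
        simpa using ((hasDerivAt_id z).mul_const (t : ℂ)).cexp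
      simpa [hFdef] using h4.const_mul (H t : ℂ)
  have hFc_zero : ∀ z : ℂ, Fc z = 0 := by
    have hanal : AnalyticOnNhd ℂ Fc Set.univ :=
      hFc_diff.differentiableOn.analyticOnNhd isOpen_univ
    have hfreq : ∃ᶠ z in nhdsWithin (0 : ℂ) {(0:ℂ)}ᶜ, Fc z = 0 := by
      have hu0 : Filter.Tendsto (fun n : ℕ => (((n:ℝ) + 1)⁻¹ : ℝ)) atTop (nhds 0) := by
        have h5 := tendsto_one_div_add_atTop_nhds_zero_nat (𝕜 := ℝ)
        simpa [one_div] using h5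
      have hu : Filter.Tendsto (fun n : ℕ => ((((n:ℝ) + 1)⁻¹ : ℝ) : ℂ)) atTop
          (nhdsWithin (0 : ℂ) {(0:ℂ)}ᶜ) := by
        apply tendsto_nhdsWithin_of_tendsto_nhds_of_eventually_within
        · have h6 := (Complex.continuous_ofReal.tendsto 0).comp hu0
          rw [Complex.ofReal_zero] at h6
          exact h6.congr fun n => rfl
        · filter_upwards with n
          simp only [Set.mem_compl_iff, Set.mem_singleton_iff]
          exact Complex.ofReal_ne_zero.mpr (by positivity)
      exact hu.frequently (Filter.Frequently.of_forall fun n => hFc0 _)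
    intro z
    exact hanal.eqOn_zero_of_preconnected_of_frequently_eq_zero isPreconnected_univ
      (Set.mem_univ 0) hfreq (Set.mem_univ z)
  -- Step D : vanishing Fourier transform of H dμ
  have hchar : ∀ v : ℝ,
      ∫ t, Complex.exp ((↑(-2 * Real.pi * v * t) : ℂ) * Complex.I) * (H t : ℂ) ∂μ = 0 := by
    intro v
    have h0 := hFc_zero ((↑(-2 * Real.pi * v) : ℂ) * Complex.I)
    rw [hFcdef] at h0
    simp only at h0
    rw [← h0]
    apply integral_congr_ae
    filter_upwards with t
    rw [hFdef]
    simp only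
    rw [mul_comm]
    congr 2
    push_cast
    ring
  -- test against smooth compactly supported functions
  have hTest : ∀ (φ : ℝ → ℝ), ContDiff ℝ ((⊤ : ℕ∞) : WithTop ℕ∞) φ → HasCompactSupport φ →
      ∫ t, φ t • ((H t : ℂ)) ∂μ = 0 := by
    intro φ hφ hcs
    set Φ : SchwartzMap ℝ ℂ := toCpxSchwartz φ hφ hcs with hΦdef
    set w : SchwartzMap ℝ ℂ := (SchwartzMap.fourierTransformCLE ℂ (SchwartzMap ℝ ℂ)).symm Φ with hwdef
    have hΦw : ∀ t : ℝ, (φ t : ℂ) = ∫ v : ℝ,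
        Complex.exp ((↑(-2 * Real.pi * v * t) : ℂ) * Complex.I) • w v := by
      intro t
      have h1 : Φ = (SchwartzMap.fourierTransformCLE ℂ (SchwartzMap ℝ ℂ)) w := by
        rw [hwdef, ContinuousLinearEquiv.apply_symm_apply]
      have h2 : (Φ : ℝ → ℂ) t = FourierTransform.fourier (w : ℝ → ℂ) t := by
        rw [h1]; rfl
      rw [show ((φ t : ℂ)) = (Φ : ℝ → ℂ) t from rfl, h2,
        Real.fourier_real_eq_integral_exp_smul]
    have hw_int : Integrable (w : ℝ → ℂ) volume := w.integrable
    set K : ℝ → ℝ → ℂ := fun v t =>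
      w v * (Complex.exp ((↑(-2 * Real.pi * v * t) : ℂ) * Complex.I) * (H t : ℂ)) with hKdef
    have hKu : Function.uncurry K = fun p : ℝ × ℝ =>
        w p.1 * (Complex.exp ((↑(-2 * Real.pi * p.1 * p.2) : ℂ) * Complex.I) * (H p.2 : ℂ)) := by
      rw [hKdef]; rfl
    have hK_int : Integrable (Function.uncurry K) (volume.prod μ) := by
      have hmeas : AEStronglyMeasurable (Function.uncurry K) (volume.prod μ) := by
        rw [hKu]
        apply AEStronglyMeasurable.mul
        · exact (w.continuous.comp continuous_fst).aestronglyMeasurable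
        · apply AEStronglyMeasurable.mul
          · apply Continuous.aestronglyMeasurable
            apply Complex.continuous_exp.comp
            apply Continuous.mul _ continuous_const
            exact Complex.continuous_ofReal.comp (by fun_prop)
          · exact (Complex.continuous_ofReal.comp_aestronglyMeasurable hH_aesm).comp_snd
      refine (hw_int.norm.mul_prod hH_int.norm).mono' hmeas ?_
      filter_upwards with p
      have h7 : ‖Function.uncurry K p‖ = ‖w p.1‖ * |H p.2| := by
        rw [hKu]
        simp only [norm_mul, Complex.norm_real, Real.norm_eq_abs]
        rw [Complex.norm_exp_ofReal_mul_I, one_mul]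
      rw [h7]
      simp [Real.norm_eq_abs]
    have hswap := integral_integral_swap hK_int
    have hLHS : ∫ v, ∫ t, K v t ∂μ = 0 := by
      have h8 : ∀ v, ∫ t, K v t ∂μ = 0 := by
        intro v
        rw [hKdef]
        simp only
        rw [integral_const_mul, hchar v, mul_zero]
      simp [h8]
    rw [hswap] at hLHS
    have hRHS : ∫ t, ∫ v, K v t ∂(volume : Measure ℝ) ∂μ
        = ∫ t, (φ t : ℂ) * (H t : ℂ) ∂μ := by
      apply integral_congr_ae
      filter_upwards with t
      have h9 : (fun v => K v t) = fun v =>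
          (Complex.exp ((↑(-2 * Real.pi * v * t) : ℂ) * Complex.I) • w v) * (H t : ℂ) := by
        funext v
        rw [hKdef]
        simp only [smul_eq_mul]
        ring
      rw [h9, integral_mul_const, ← hΦw t]
    rw [hRHS] at hLHS
    rw [← hLHS]
    apply integral_congr_ae
    filter_upwards with t
    rw [Complex.real_smul]
  have hae : ∀ᵐ t ∂μ, (H t : ℂ) = 0 := by
    have hloc : LocallyIntegrable (fun t => (H t : ℂ)) μ := hH_int.ofReal.locallyIntegrable
    exact ae_eq_zero_of_integral_contDiff_smul_eq_zero hloc (fun φ hφ hcs => hTest φ hφ hcs)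
  filter_upwards [hae] with t ht
  have hH0 : H t = 0 := by exact_mod_cast ht
  rw [hHdef] at hH0
  simp only [mul_eq_zero] at hH0
  rcases hH0 with h1 | h2
  · simpa using h1
  · exact absurd h2 (Real.exp_ne_zero _)
end
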